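/- For every k ≥ 2, the fully k-ary string s = 1 0 2 0 3 0 … (k−1) 0 (the concatenation, for i = 1, …, k−1, of the two-symbol blocks i 0), which has length n = 2(k−1), has flip grouping distance d_g(s) = n − 2 = 2k − 4. -/

import Mathlib

/-- Prefix reversal (flip) of the first `i` symbols of `s`. -/
def pflip (i : ℕ) (s : List ℕ) : List ℕ := (s.take i).reverse ++ s.drop i

/-- One flip step: `t` is obtained from `s` by some flip `f^(i)` with `1 ≤ i ≤ |s|`. -/
def FlipStep (s t : List ℕ) : Prop := ∃ i, 1 ≤ i ∧ i ≤ s.length ∧ t = pflip i s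

/-- `ReachIn m s t`: `t` can be obtained from `s` by exactly `m` flips. -/
def ReachIn : ℕ → List ℕ → List ℕ → Prop
  | 0 => fun s t => s = t
  | (m+1) => fun s t => ∃ u, FlipStep s u ∧ ReachIn m u t

/-- Flip distance: minimum number of flips transforming `s` into `t`. -/
noncomputable def flipDist (s t : List ℕ) : ℕ := sInf {m | ReachIn m s t}

/-- Two strings are compatible if every symbol occurs equally often in both. -/
def Compatible (s t : List ℕ) : Prop := ∀ a, s.count a = t.count a

/-- A string is fully `k`-ary if the set of symbols occurring in it is exactly `{0,…,k-1}`. -/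
def FullyKary (k : ℕ) (s : List ℕ) : Prop := ∀ a, a ∈ s ↔ a < k

/-- A string is normalized if no two adjacent symbols are equal. -/
def Normalized (s : List ℕ) : Prop := s.Chain' (· ≠ ·)

/-- A string is grouped if the occurrences of each symbol are consecutive. -/
def Grouped (s : List ℕ) : Prop :=
  ∀ i j l : Fin s.length, i < j → j < l → s.get i = s.get l → s.get j = s.get i

/-- Flip grouping distance: minimum number of flips transforming `s` into some grouped string. -/
noncomputable def groupDist (s : List ℕ) : ℕ := sInf {m | ∃ t, Grouped t ∧ ReachIn m s t}

/-- Flip sorting distance: flip distance from `s` to its non-descending rearrangement `I(s)`. -/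
noncomputable def sortDist (s : List ℕ) : ℕ := flipDist s (s.insertionSort (· ≤ ·))

/-- `rep w m` is the concatenation of `m` copies of the string `w`. -/
def rep (w : List ℕ) (m : ℕ) : List ℕ := (List.replicate m w).flatten


/-!
Call a pair of equal neighbouring symbols an adjacency. A flip changes neighbours only at its
cut, so it creates at most one adjacency; hence `2 · #adjacencies + [the string starts with 0]`
grows by at most one per flip as long as `0` is the only repeated symbol. This potential is `0`
on `1 0 2 0 … (k-1) 0`, while a grouped string with `k - 1` zeros has at least `k - 2`
adjacencies, so at least `2k - 4` flips are needed. Conversely, flips of lengths `2j` and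
`2j + 1` take `j … 1 0^j (j+1) 0 …` to `(j+1) … 1 0^(j+1) …`, so `2k - 4` flips reach the
grouped string `(k-1) … 1 0^(k-1)`.
-/

section Adjacencies

variable {α : Type*} [DecidableEq α]

def adjacencies : List α → ℕ
  | a :: b :: t => (if a = b then 1 else 0) + adjacencies (b :: t)
  | _ => 0

@[simp] lemma adjacencies_nil : adjacencies ([] : List α) = 0 := rfl

@[simp] lemma adjacencies_singleton (a : α) : adjacencies [a] = 0 := rfl

lemma adjacencies_cons_cons (a b : α) (t : List α) :
    adjacencies (a :: b :: t) = (if a = b then 1 else 0) + adjacencies (b :: t) := rfl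

lemma adjacencies_le_cons (a : α) (t : List α) : adjacencies t ≤ adjacencies (a :: t) := by
  cases t <;> simp [adjacencies_cons_cons]

lemma adjacencies_append_cons (x : List α) (b : α) (y : List α) :
    adjacencies (x ++ b :: y) =
      adjacencies x + adjacencies (b :: y) + if x.getLast? = some b then 1 else 0 := by
  induction x with
  | nil => simp
  | cons a x ih =>
    cases x with
    | nil => simp [adjacencies_cons_cons, add_comm]
    | cons c x =>
      rw [List.cons_append, List.cons_append, adjacencies_cons_cons a c, ← List.cons_append, ih,
        adjacencies_cons_cons a c, List.getLast?_cons_cons]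
      ring

lemma adjacencies_reverse (s : List α) : adjacencies s.reverse = adjacencies s := by
  induction s with
  | nil => rfl
  | cons a t ih =>
    rw [List.reverse_cons, adjacencies_append_cons, ih, List.getLast?_reverse]
    cases t <;> simp [adjacencies_cons_cons, eq_comm, add_comm]

end Adjacencies

lemma pflip_append {i : ℕ} (x y : List ℕ) (hx : x.length = i) :
    pflip i (x ++ y) = x.reverse ++ y := by
  rw [pflip, List.take_left' hx, List.drop_left' hx]

lemma flipStep_append {x : List ℕ} (y : List ℕ) (hx : x ≠ []) :
    FlipStep (x ++ y) (x.reverse ++ y) :=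
  ⟨x.length, List.length_pos_iff.mpr hx, by simp, (pflip_append x y rfl).symm⟩

lemma FlipStep.exists_append {s t : List ℕ} (h : FlipStep s t) :
    ∃ x y, x ≠ [] ∧ s = x ++ y ∧ t = x.reverse ++ y := by
  obtain ⟨i, hi, his, rfl⟩ := h
  refine ⟨s.take i, s.drop i, ?_, (List.take_append_drop i s).symm, rfl⟩
  rw [Ne, List.take_eq_nil_iff]
  rintro (rfl | rfl) <;> simp_all

lemma FlipStep.perm {s t : List ℕ} (h : FlipStep s t) : s.Perm t := by
  obtain ⟨x, y, -, rfl, rfl⟩ := h.exists_append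
  exact (List.reverse_perm x).symm.append_right y

lemma ReachIn.trans {m m' : ℕ} {s t u : List ℕ} (h : ReachIn m s t) (h' : ReachIn m' t u) :
    ReachIn (m + m') s u := by
  induction m generalizing s with
  | zero => cases h; simpa using h'
  | succ m ih =>
    obtain ⟨v, hv, hr⟩ := h
    exact Nat.add_right_comm m 1 m' ▸ ⟨v, hv, ih hr⟩

lemma ReachIn.perm {m : ℕ} {s t : List ℕ} (h : ReachIn m s t) : s.Perm t := by
  induction m generalizing s with
  | zero => cases h; rfl
  | succ m ih =>
    obtain ⟨v, hv, hr⟩ := h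
    exact hv.perm.trans (ih hr)

def potential (c : ℕ) (s : List ℕ) : ℕ := 2 * adjacencies s + if s.head? = some c then 1 else 0

/-- A flip creates an adjacency only at its cut, and only if the symbol `a` that ends the new
prefix also starts the suffix; then `a` occurs twice, so `a = c`, and before the flip the string
started with `c` while afterwards it does not. -/
lemma potential_le_of_flipStep {c : ℕ} {s t : List ℕ} (hs : ∀ a ≠ c, s.count a ≤ 1)
    (h : FlipStep s t) : potential c t ≤ potential c s + 1 := by
  obtain ⟨x, y, hx, rfl, rfl⟩ := h.exists_append
  have head_rev : (x.reverse ++ y).head? = x.getLast? := by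
    rw [List.head?_append_of_ne_nil _ (by simpa using hx), List.head?_reverse]
  have head : (x ++ y).head? = x.head? := List.head?_append_of_ne_nil _ hx
  cases y with
  | nil =>
    simp only [potential, List.append_nil, adjacencies_reverse]
    split_ifs <;> omega
  | cons b y =>
    simp only [potential, adjacencies_append_cons, adjacencies_reverse, List.getLast?_reverse,
      head_rev, head]
    by_cases hfirst : x.head? = some b
    · have hbc : b = c := by
        by_contra hbc
        have hbx : b ∈ x := List.mem_of_mem_head? hfirst
        have := hs b hbc
        rw [List.count_append, List.count_cons_self] at this
        have := List.count_pos_iff.mpr hbx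
        omega
      subst hbc
      split_ifs <;> omega
    · split_ifs <;> omega

lemma potential_le_of_reachIn {c m : ℕ} {s t : List ℕ} (hs : ∀ a ≠ c, s.count a ≤ 1)
    (h : ReachIn m s t) : potential c t ≤ potential c s + m := by
  induction m generalizing s with
  | zero => cases h; rfl
  | succ m ih =>
    obtain ⟨u, hu, hr⟩ := h
    have hu' : ∀ a ≠ c, u.count a ≤ 1 := fun a ha => hu.perm.count_eq a ▸ hs a ha
    have := potential_le_of_flipStep hs hu
    have := ih hu' hr
    omega

lemma Grouped.tail {b : ℕ} {u : List ℕ} (h : Grouped (b :: u)) : Grouped u :=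
  fun i j l hij hjl he => h i.succ j.succ l.succ (Fin.succ_lt_succ_iff.mpr hij)
    (Fin.succ_lt_succ_iff.mpr hjl) he

lemma Grouped.not_mem {a b : ℕ} {u : List ℕ} (h : Grouped (a :: b :: u)) (hab : a ≠ b) :
    a ∉ u := by
  intro ha
  obtain ⟨l, hl⟩ := List.get_of_mem ha
  exact hab (h 0 1 l.succ.succ (by simp) (by simp [Fin.lt_def]) hl.symm).symm

lemma Grouped.count_le_adjacencies_add_one {t : List ℕ} (h : Grouped t) (a : ℕ) :
    t.count a ≤ adjacencies t + 1 := by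
  induction t with
  | nil => simp
  | cons b u ih =>
    have ih := ih h.tail
    by_cases hab : b = a
    · subst hab
      cases u with
      | nil => simp
      | cons c w =>
        rw [List.count_cons_self, adjacencies_cons_cons]
        by_cases hbc : b = c
        · simp only [hbc, if_true] at ih ⊢
          omega
        · have hw : (c :: w).count b = 0 := by
            rw [List.count_cons_of_ne (Ne.symm hbc), List.count_eq_zero.mpr (h.not_mem hbc)]
          omega
    · rw [List.count_cons_of_ne hab]
      exact ih.trans (Nat.succ_le_succ (adjacencies_le_cons b u))

lemma grouped_of_pairwise_ge {t : List ℕ} (h : t.Pairwise (· ≥ ·)) : Grouped t := by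
  intro i j l hij hjl he
  have := h.rel_get_of_lt hij
  have := h.rel_get_of_lt hjl
  omega

def zeroPairs (s r : ℕ) : List ℕ := ((List.range' s r).map fun i => [i + 1, 0]).flatten

@[simp] lemma zeroPairs_zero (s : ℕ) : zeroPairs s 0 = [] := rfl

lemma zeroPairs_succ (s r : ℕ) : zeroPairs s (r + 1) = (s + 1) :: 0 :: zeroPairs (s + 1) r := by
  simp [zeroPairs, List.range'_succ]

lemma length_zeroPairs (s r : ℕ) : (zeroPairs s r).length = 2 * r := by
  induction r generalizing s with
  | zero => rfl
  | succ r ih => simp only [zeroPairs_succ, List.length_cons, ih]; ring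

lemma head?_zeroPairs_ne_zero (s r : ℕ) : (zeroPairs s r).head? ≠ some 0 := by
  cases r <;> simp [zeroPairs_succ]

lemma adjacencies_zeroPairs (s r : ℕ) : adjacencies (zeroPairs s r) = 0 := by
  induction r generalizing s with
  | zero => rfl
  | succ r ih =>
    rw [zeroPairs_succ, adjacencies_cons_cons]
    cases r with
    | zero => simp
    | succ r =>
      rw [zeroPairs_succ (s + 1), adjacencies_cons_cons 0, ← zeroPairs_succ, ih]
      simp

lemma count_zeroPairs_zero (s r : ℕ) : (zeroPairs s r).count 0 = r := by
  induction r generalizing s with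
  | zero => rfl
  | succ r ih => simp [zeroPairs_succ, ih]

lemma count_zeroPairs_le_one {a : ℕ} (ha : a ≠ 0) (s r : ℕ) : (zeroPairs s r).count a ≤ 1 := by
  induction r generalizing s with
  | zero => simp
  | succ r ih =>
    have hmem : s + 1 ∉ zeroPairs (s + 1) r := by
      simp only [zeroPairs, List.mem_flatten, List.mem_map, List.mem_range']
      grind
    rw [zeroPairs_succ, List.count_cons, List.count_cons_of_ne (Ne.symm ha)]
    by_cases has : s + 1 = a
    · subst has
      simp [List.count_eq_zero.mpr hmem]
    · simpa [has] using ih (s + 1)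

/-- Reached from `zeroPairs 0 (j + r)` after `2 (j - 1)` flips. -/
def stage (j r : ℕ) : List ℕ := (List.range' 1 j).reverse ++ List.replicate j 0 ++ zeroPairs j r

lemma stage_one (r : ℕ) : stage 1 r = zeroPairs 0 (r + 1) := by
  simp [stage, zeroPairs_succ]

lemma reachIn_two_stage {j : ℕ} (hj : 1 ≤ j) (r : ℕ) :
    ReachIn 2 (stage j (r + 1)) (stage (j + 1) r) := by
  have h₁ : stage j (r + 1) = ((List.range' 1 j).reverse ++ List.replicate j 0) ++
      (j + 1) :: 0 :: zeroPairs (j + 1) r := by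
    simp [stage, zeroPairs_succ]
  have h₂ : ((List.range' 1 j).reverse ++ List.replicate j 0).reverse ++
      (j + 1) :: 0 :: zeroPairs (j + 1) r =
      (List.replicate j 0 ++ List.range' 1 j ++ [j + 1]) ++ 0 :: zeroPairs (j + 1) r := by
    simp
  have h₃ : (List.replicate j 0 ++ List.range' 1 j ++ [j + 1]).reverse ++
      0 :: zeroPairs (j + 1) r = stage (j + 1) r := by
    simp [stage, List.range'_concat, List.replicate_succ', add_comm]
  refine ⟨_, h₁ ▸ flipStep_append _ ?_, _, h₂ ▸ flipStep_append _ (by simp), h₃⟩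
  exact List.append_ne_nil_of_right_ne_nil _ (by rw [Ne, List.replicate_eq_nil_iff]; omega)

lemma reachIn_stage {j : ℕ} (hj : 1 ≤ j) (i r : ℕ) :
    ReachIn (2 * i) (stage j (r + i)) (stage (j + i) r) := by
  induction i generalizing j with
  | zero => rfl
  | succ i ih =>
    have := (reachIn_two_stage hj (r + i)).trans (ih (j := j + 1) (by omega))
    convert this using 2 <;> omega

lemma reachIn_zeroPairs_stage (n : ℕ) : ReachIn (2 * (n - 1)) (zeroPairs 0 n) (stage n 0) := by
  cases n with
  | zero => rfl
  | succ n => simpa [← stage_one, Nat.add_comm 1 n] using reachIn_stage le_rfl n 0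

lemma grouped_stage_zero (j : ℕ) : Grouped (stage j 0) := by
  apply grouped_of_pairwise_ge
  simp only [stage, zeroPairs_zero, List.append_nil, List.pairwise_append, List.pairwise_reverse,
    List.pairwise_replicate, List.mem_reverse, List.mem_replicate]
  refine ⟨(List.pairwise_lt_range' 1).imp le_of_lt, by simp, ?_⟩
  rintro a - b ⟨-, rfl⟩
  exact Nat.zero_le a

lemma two_mul_sub_one_le_of_reachIn_grouped {n m : ℕ} {t : List ℕ}
    (h : ReachIn m (zeroPairs 0 n) t) (ht : Grouped t) : 2 * (n - 1) ≤ m := by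
  have hpot := potential_le_of_reachIn (c := 0) (fun a ha => count_zeroPairs_le_one ha 0 n) h
  have hstart : potential 0 (zeroPairs 0 n) = 0 := by
    simp [potential, adjacencies_zeroPairs, head?_zeroPairs_ne_zero]
  have hcount : t.count 0 = n := h.perm.count_eq 0 ▸ count_zeroPairs_zero 0 n
  have := ht.count_le_adjacencies_add_one 0
  rw [hstart, potential] at hpot
  omega

lemma groupDist_zeroPairs (n : ℕ) : groupDist (zeroPairs 0 n) = 2 * (n - 1) :=
  IsLeast.csInf_eq ⟨⟨stage n 0, grouped_stage_zero n, reachIn_zeroPairs_stage n⟩,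
    fun _ ⟨_, ht, h⟩ => two_mul_sub_one_le_of_reachIn_grouped h ht⟩

theorem grouping_hard_kary_string_general (k : ℕ) :
    (((List.range (k-1)).map (fun i => [i+1, 0])).flatten).length = 2*(k-1) ∧
    groupDist (((List.range (k-1)).map (fun i => [i+1, 0])).flatten) = 2*k - 4 := by
  have h : ((List.range (k-1)).map (fun i => [i+1, 0])).flatten = zeroPairs 0 (k - 1) := by
    rw [List.range_eq_range', zeroPairs]
  rw [h, length_zeroPairs, groupDist_zeroPairs]
  exact ⟨rfl, by omega⟩

theorem grouping_hard_kary_string (k : ℕ) (hk : 2 ≤ k) :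
    (((List.range (k-1)).map (fun i => [i+1, 0])).flatten).length = 2*(k-1) ∧
    groupDist (((List.range (k-1)).map (fun i => [i+1, 0])).flatten) = 2*k - 4 :=
  grouping_hard_kary_string_general k
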